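/- arXiv:2603.07488 — 2 statements merged into one kernel-verified Lean document; each statement's English description precedes it below -/
import Mathlib

section
/- In the simplicial setup, every element x of B_A can be written as x = Σ_{i=1}^c μ_[i]·a_i with μ ∈ ℤ^c and 0 ≤ μ_[i] ≤ α for all i; consequently B_A is a finite set. Moreover, if x + y ∈ B_A with x, y ∈ B, then x ∈ B_A and y ∈ B_A. -/
namespace SimplicialToric

/-- `eVec d α i` is `α` times the `i`-th standard basis vector of `ℕ^d`. -/
def eVec (d α : ℕ) (i : Fin d) : Fin d → ℕ := fun j => if j = i then α else 0

/-- The Hilbert basis of a submonoid `B ⊆ ℕ^d`: the set of irreducible elements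
(in `ℕ^d` the only unit is `0`). -/
def Hilb {d : ℕ} (B : AddSubmonoid (Fin d → ℕ)) : Set (Fin d → ℕ) :=
  {b | b ∈ B ∧ b ≠ 0 ∧ ∀ x ∈ B, ∀ y ∈ B, b = x + y → x = 0 ∨ y = 0}

/-- The submonoid `A = Σᵢ ℤ≥0·eᵢ = αℤ≥0^d`. -/
def Amon (d α : ℕ) : AddSubmonoid (Fin d → ℕ) :=
  AddSubmonoid.closure (Set.range (eVec d α))

/-- `B_A = {x ∈ B : x − a ∉ B for every a ∈ A \ {0}}`. -/
def BA {d : ℕ} (B : AddSubmonoid (Fin d → ℕ)) (α : ℕ) : Set (Fin d → ℕ) :=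
  {x | x ∈ B ∧ ∀ z ∈ Amon d α, z ≠ 0 → ∀ y ∈ B, x ≠ y + z}

/-- The generators `a₁,…,a_c,e₁,…,e_d` of `B`, indexed by the variables of
`S = K[x₁,…,x_c,y₁,…,y_d]`; variable `Fin.castAdd d i` is `xᵢ`, variable
`Fin.natAdd c j` is `yⱼ`. -/
def gens (c d α : ℕ) (a : Fin c → Fin d → ℕ) : Fin (c + d) → Fin d → ℕ :=
  Fin.addCases a (eVec d α)

/-- The element of `B` represented by the monomial with exponent vector `σ`:
`π(x^μ y^ν) = t^(valE σ)`. -/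
def valE (c d α : ℕ) (a : Fin c → Fin d → ℕ) (σ : Fin (c + d) →₀ ℕ) : Fin d → ℕ :=
  ∑ v : Fin (c + d), σ v • gens c d α a v

/-- total degree of a monomial (exponent vector). -/
def degE {N : ℕ} (σ : Fin N →₀ ℕ) : ℕ := ∑ v, σ v

/-- the graded reverse lexicographic order: `grevlex σ τ` means `σ ≺ τ`,
i.e. `deg σ < deg τ`, or degrees agree and the last nonzero entry of `τ − σ`
is negative. -/
def grevlex {N : ℕ} (σ τ : Fin N →₀ ℕ) : Prop :=
  degE σ < degE τ ∨ (degE σ = degE τ ∧ ∃ k, τ k < σ k ∧ ∀ l, k < l → σ l = τ l)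

/-- `x ∼ y` iff `x − y ∈ gp(A) = αℤ^d`. -/
def Rel {d : ℕ} (α : ℕ) (x y : Fin d → ℕ) : Prop :=
  ∀ j, (α : ℤ) ∣ (x j : ℤ) - (y j : ℤ)

/-- `Γ` is an equivalence class of `B_A` modulo `αℤ^d`. -/
def IsClass {d : ℕ} (B : AddSubmonoid (Fin d → ℕ)) (α : ℕ) (Γ : Set (Fin d → ℕ)) : Prop :=
  ∃ x ∈ BA B α, Γ = {y | y ∈ BA B α ∧ Rel α x y}

/-- the total order on an equivalence class of `B_A`: `b ≺ c` iff the last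
nonzero entry of `b − c` is negative. -/
def ltCls {d : ℕ} (x y : Fin d → ℕ) : Prop :=
  ∃ k, x k < y k ∧ ∀ l, k < l → x l = y l

/-- `joinSub x y = x∨y − y`, where `x∨y` is the componentwise maximum. -/
def joinSub {d : ℕ} (x y : Fin d → ℕ) : Fin d → ℕ := fun j => max (x j) (y j) - y j

/-- the monomial with exponents `σ` lies in `T = K[y₁,…,y_d]`. -/
def yOnly (c d : ℕ) (σ : Fin (c + d) →₀ ℕ) : Prop := ∀ i : Fin c, σ (Fin.castAdd d i) = 0

/-- the monomial with exponents `σ` involves only the `x`-variables. -/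
def xOnly (c d : ℕ) (σ : Fin (c + d) →₀ ℕ) : Prop := ∀ j : Fin d, σ (Fin.natAdd c j) = 0

/-- the set `N₁`, for a given choice `m` of the minimal monomials `m_b`. -/
def N1set (c d α : ℕ) (a : Fin c → Fin d → ℕ) (B : AddSubmonoid (Fin d → ℕ))
    (m : (Fin d → ℕ) → (Fin (c + d) →₀ ℕ)) : Set (Fin (c + d) →₀ ℕ) :=
  {n | ∃ (i : Fin c) (b : Fin d → ℕ), b ∈ BA B α ∧
    n = Finsupp.single (Fin.castAdd d i) 1 + m b ∧ n ≠ m (a i + b)}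

/-- the set `N₂ = ∪_Γ N_Γ`, where `N_Γ = {n(bᵢ,bⱼ) = m_{bⱼ}·m_{bᵢ∨bⱼ−bⱼ} : bᵢ ≺ bⱼ in Γ}`. -/
def N2set {d : ℕ} (c α : ℕ) (B : AddSubmonoid (Fin d → ℕ))
    (m : (Fin d → ℕ) → (Fin (c + d) →₀ ℕ)) : Set (Fin (c + d) →₀ ℕ) :=
  {n | ∃ Γ, IsClass B α Γ ∧ ∃ bi ∈ Γ, ∃ bj ∈ Γ, ltCls bi bj ∧ n = m bj + m (joinSub bi bj)}

/-- `σ` is the exponent vector of the initial (i.e. `≺`-largest) term of `f`. -/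
def IsLeadMon {N : ℕ} {K : Type*} [Field K] (f : MvPolynomial (Fin N) K)
    (σ : Fin N →₀ ℕ) : Prop :=
  σ ∈ f.support ∧ ∀ τ ∈ f.support, τ = σ ∨ grevlex τ σ

/-- the initial ideal of `I` with respect to the graded reverse lexicographic order. -/
noncomputable def initialIdeal {N : ℕ} {K : Type*} [Field K] (I : Ideal (MvPolynomial (Fin N) K)) :
    Ideal (MvPolynomial (Fin N) K) :=
  Ideal.span {g | ∃ f ∈ I, ∃ σ, IsLeadMon f σ ∧ g = MvPolynomial.monomial σ (1 : K)}

end SimplicialToric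

/-!
Every `x ∈ B` is `Σ μᵢ aᵢ + z` with `z ∈ A`. Writing `μᵢ = α qᵢ + rᵢ` with `rᵢ < α`, the part
`Σ α qᵢ aᵢ = Σᵢ Σⱼ qᵢ aᵢⱼ eⱼ` also lies in `A`, so `x = Σ rᵢ aᵢ + z'` with `z' ∈ A`; for `x ∈ B_A`
this forces `z' = 0`. Finiteness follows since there are finitely many such `r`, and closure
under summands is immediate from the definition of `B_A`.
-/

namespace SimplicialToric

section BA

variable {d α : ℕ} {B : AddSubmonoid (Fin d → ℕ)}

theorem nsmul_mem_Amon (v : Fin d → ℕ) : α • v ∈ Amon d α := by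
  have hv : α • v = ∑ j, v j • eVec d α j := by
    ext k
    simp [eVec, mul_comm]
  rw [hv]
  exact sum_mem fun j _ => nsmul_mem (AddSubmonoid.subset_closure (Set.mem_range_self j)) _

theorem eq_zero_of_mem_BA {x y z : Fin d → ℕ} (hx : x ∈ BA B α) (hy : y ∈ B)
    (hz : z ∈ Amon d α) (hxyz : x = y + z) : z = 0 :=
  by_contra fun hz0 => hx.2 z hz hz0 y hy hxyz

theorem mem_BA_of_add_left {x y : Fin d → ℕ} (hx : x ∈ B) (hy : y ∈ B)
    (hxy : x + y ∈ BA B α) : x ∈ BA B α :=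
  ⟨hx, fun z hz hz0 w hw hxw =>
    hxy.2 z hz hz0 (w + y) (B.add_mem hw hy) (by rw [hxw, add_right_comm])⟩

theorem mem_BA_of_add_right {x y : Fin d → ℕ} (hx : x ∈ B) (hy : y ∈ B)
    (hxy : x + y ∈ BA B α) : y ∈ BA B α :=
  mem_BA_of_add_left hy hx (add_comm x y ▸ hxy)

end BA

section Simplicial

variable {c d α : ℕ} {a : Fin c → Fin d → ℕ}

theorem sum_nsmul_eq_sum_mod_add_nsmul_sum_div (μ : Fin c → ℕ) :
    ∑ i, μ i • a i = ∑ i, (μ i % α) • a i + α • ∑ i, (μ i / α) • a i := by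
  rw [Finset.smul_sum, ← Finset.sum_add_distrib]
  refine Finset.sum_congr rfl fun i _ => ?_
  rw [smul_smul, ← add_smul, Nat.mod_add_div]

theorem exists_lt_of_mem_BA_closure (hα : 0 < α) {x : Fin d → ℕ}
    (hx : x ∈ BA (AddSubmonoid.closure (Set.range a ∪ Set.range (eVec d α))) α) :
    ∃ μ : Fin c → ℕ, (∀ i, μ i < α) ∧ x = ∑ i, μ i • a i := by
  have hxB := hx.1
  rw [AddSubmonoid.closure_union, AddSubmonoid.mem_sup] at hxB
  obtain ⟨y, hy, z, hz, rfl⟩ := hxB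
  obtain ⟨μ, rfl⟩ := AddSubmonoid.mem_closure_range_iff_of_fintype.mp hy
  set r := ∑ i, (μ i % α) • a i
  set w := α • ∑ i, (μ i / α) • a i
  have hr : r ∈ AddSubmonoid.closure (Set.range a ∪ Set.range (eVec d α)) :=
    AddSubmonoid.closure_mono Set.subset_union_left
      (AddSubmonoid.mem_closure_range_iff_of_fintype.mpr ⟨_, rfl⟩)
  have hwz : w + z = 0 :=
    eq_zero_of_mem_BA hx hr (add_mem (nsmul_mem_Amon _) hz)
      (by rw [sum_nsmul_eq_sum_mod_add_nsmul_sum_div, add_assoc])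
  refine ⟨fun i => μ i % α, fun i => Nat.mod_lt _ hα, ?_⟩
  rw [sum_nsmul_eq_sum_mod_add_nsmul_sum_div, add_assoc, hwz, add_zero]

theorem BA_closure_finite (hα : 0 < α) :
    (BA (AddSubmonoid.closure (Set.range a ∪ Set.range (eVec d α))) α).Finite :=
  (Set.finite_range fun μ : Fin c → Fin α => ∑ i, (μ i : ℕ) • a i).subset fun _ hx =>
    let ⟨μ, hμ, hx⟩ := exists_lt_of_mem_BA_closure hα hx
    ⟨fun i => ⟨μ i, hμ i⟩, hx.symm⟩

end Simplicial

end SimplicialToric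

open SimplicialToric

theorem BA_repr_bounded_finite_and_summand_closed_general
    (c d α : ℕ) (hα : 0 < α)
    (a : Fin c → Fin d → ℕ) (B : AddSubmonoid (Fin d → ℕ))
    (hBgen : B = AddSubmonoid.closure (Set.range a ∪ Set.range (eVec d α))) :
    (∀ x ∈ BA B α, ∃ μ : Fin c → ℕ, (∀ i, μ i ≤ α) ∧ x = ∑ i, μ i • a i) ∧
    (BA B α).Finite ∧
    (∀ x ∈ B, ∀ y ∈ B, x + y ∈ BA B α → x ∈ BA B α ∧ y ∈ BA B α) := by
  subst hBgen
  refine ⟨fun x hx => ?_, BA_closure_finite hα, fun x hx y hy hxy =>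
    ⟨mem_BA_of_add_left hx hy hxy, mem_BA_of_add_right hx hy hxy⟩⟩
  obtain ⟨μ, hμ, rfl⟩ := exists_lt_of_mem_BA_closure hα hx
  exact ⟨μ, fun i => (hμ i).le, rfl⟩

/-- Every element of `B_A` is a sum `Σ μᵢ aᵢ` with `0 ≤ μᵢ ≤ α`;
consequently `B_A` is finite; and `x + y ∈ B_A` with `x, y ∈ B` forces `x, y ∈ B_A`. -/
theorem BA_repr_bounded_finite_and_summand_closed
    (c d α : ℕ) (hα : 0 < α)
    (a : Fin c → Fin d → ℕ) (B : AddSubmonoid (Fin d → ℕ))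
    (hBgen : B = AddSubmonoid.closure (Set.range a ∪ Set.range (eVec d α)))
    (hhilb : Hilb B = Set.range a ∪ Set.range (eVec d α))
    (hdeg : ∀ i, ∑ j, a i j = α) :
    (∀ x ∈ BA B α, ∃ μ : Fin c → ℕ, (∀ i, μ i ≤ α) ∧ x = ∑ i, μ i • a i) ∧
    (BA B α).Finite ∧
    (∀ x ∈ B, ∀ y ∈ B, x + y ∈ BA B α → x ∈ BA B α ∧ y ∈ BA B α) :=
  BA_repr_bounded_finite_and_summand_closed_general c d α hα a B hBgen
end

section
/- In the simplicial setup, let b_i ≺ b_j be two elements of one equivalence class of B_A. Then the binomial n(b_i, b_j) − m_{b_i}·m_{(b_i∨b_j − b_i)} lies in ker π, and m_{b_i}·m_{(b_i∨b_j − b_i)} ≺ n(b_i, b_j); consequently n(b_i, b_j) ∉ M_B. -/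
open SimplicialToric

/-!
Both monomials map to `t^(bᵢ∨bⱼ)`. Since `bᵢ ∼ bⱼ`, the cofactors `bᵢ∨bⱼ − bᵢ` and `bᵢ∨bⱼ − bⱼ`
lie in `A = α ℕ^d`, and the minimal monomial of an element `α ν` of `A` is the pure `y`-monomial
`y^ν`; on the other hand `m_{bᵢ}` and `m_{bⱼ}` involve no `y`-variable because `bᵢ, bⱼ ∈ B_A`.
So in the `y`-variables the two monomials are `y^{(bⱼ−bᵢ)⁺/α}` and `y^{(bᵢ−bⱼ)⁺/α}`, and at the last
coordinate `k` where `bᵢ` and `bⱼ` differ (`bᵢ k < bⱼ k`) only the first has a positive exponent, while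
the `x`-variables come before all `y`-variables: this is the reverse lexicographic comparison.
A monomial lying strictly above another one with the same image is not minimal, hence not in `M_B`.
-/

namespace SimplicialToric

noncomputable def yExp (c : ℕ) {d : ℕ} (ν : Fin d → ℕ) : Fin (c + d) →₀ ℕ :=
  Finsupp.equivFunOnFinite.symm (Fin.addCases 0 ν)

section Monomials

variable {c d α : ℕ} {a : Fin c → Fin d → ℕ}

@[simp]
lemma yExp_castAdd (ν : Fin d → ℕ) (i : Fin c) : yExp c ν (Fin.castAdd d i) = 0 := by
  simp [yExp]

@[simp]
lemma yExp_natAdd (ν : Fin d → ℕ) (j : Fin d) : yExp c ν (Fin.natAdd c j) = ν j := by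
  simp [yExp]

lemma degE_eq_sum_add (σ : Fin (c + d) →₀ ℕ) :
    degE σ = ∑ i, σ (Fin.castAdd d i) + ∑ j, σ (Fin.natAdd c j) :=
  Fin.sum_univ_add _

lemma degE_yExp (ν : Fin d → ℕ) : degE (yExp c ν) = ∑ j, ν j := by
  simp [degE_eq_sum_add]

@[simp]
lemma gens_castAdd (i : Fin c) : gens c d α a (Fin.castAdd d i) = a i :=
  Fin.addCases_left i

@[simp]
lemma gens_natAdd (j : Fin d) : gens c d α a (Fin.natAdd c j) = eVec d α j :=
  Fin.addCases_right j

lemma valE_add (σ τ : Fin (c + d) →₀ ℕ) :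
    valE c d α a (σ + τ) = valE c d α a σ + valE c d α a τ := by
  simp only [valE, Finsupp.add_apply, add_smul, Finset.sum_add_distrib]

lemma valE_single_one (v : Fin (c + d)) :
    valE c d α a (Finsupp.single v 1) = gens c d α a v := by
  rw [valE, Finset.sum_eq_single v (fun w _ hw => by simp [Finsupp.single_eq_of_ne hw])
    (by simp)]
  simp

lemma valE_yExp (ν : Fin d → ℕ) : valE c d α a (yExp c ν) = α • ν := by
  funext j
  simp [valE, Fin.sum_univ_add, eVec, mul_comm]

lemma mul_le_valE_apply (σ : Fin (c + d) →₀ ℕ) (j : Fin d) :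
    σ (Fin.natAdd c j) * α ≤ valE c d α a σ j := by
  have h := Finset.single_le_sum (f := fun v => (σ v • gens c d α a v) j)
    (fun _ _ => Nat.zero_le _) (Finset.mem_univ (Fin.natAdd c j))
  simpa [valE, Finset.sum_apply, eVec] using h

lemma sum_gens_apply (hdeg : ∀ i, ∑ j, a i j = α) (v : Fin (c + d)) :
    ∑ j, gens c d α a v j = α := by
  induction v using Fin.addCases with
  | left i => simpa using hdeg i
  | right j => simp [eVec]

lemma sum_valE_apply (hdeg : ∀ i, ∑ j, a i j = α) (σ : Fin (c + d) →₀ ℕ) :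
    ∑ j, valE c d α a σ j = α * degE σ := by
  simp only [valE, degE, Finset.sum_apply, Pi.smul_apply, smul_eq_mul]
  rw [Finset.sum_comm, Finset.mul_sum]
  refine Finset.sum_congr rfl fun v _ => ?_
  rw [← Finset.mul_sum, sum_gens_apply hdeg, mul_comm]

lemma degE_eq_of_valE_eq (hα : 0 < α) (hdeg : ∀ i, ∑ j, a i j = α)
    {σ τ : Fin (c + d) →₀ ℕ} (h : valE c d α a σ = valE c d α a τ) :
    degE σ = degE τ :=
  Nat.eq_of_mul_eq_mul_left hα <| by rw [← sum_valE_apply hdeg, h, sum_valE_apply hdeg]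

lemma valE_mem {B : AddSubmonoid (Fin d → ℕ)}
    (hBgen : B = AddSubmonoid.closure (Set.range a ∪ Set.range (eVec d α)))
    (σ : Fin (c + d) →₀ ℕ) : valE c d α a σ ∈ B := by
  refine sum_mem fun v _ => AddSubmonoid.nsmul_mem _ ?_ _
  rw [hBgen]
  refine AddSubmonoid.subset_closure ?_
  induction v using Fin.addCases with
  | left i => simp
  | right j => simp

lemma map_monomial_one {K : Type*} [Field K]
    (π : MvPolynomial (Fin (c + d)) K →ₐ[K] AddMonoidAlgebra K (Fin d → ℕ))
    (hπ : ∀ v, π (MvPolynomial.X v) = AddMonoidAlgebra.of' K (Fin d → ℕ) (gens c d α a v))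
    (σ : Fin (c + d) →₀ ℕ) :
    π (MvPolynomial.monomial σ (1 : K)) = AddMonoidAlgebra.single (valE c d α a σ) 1 := by
  rw [← MvPolynomial.prod_X_pow_eq_monomial, map_prod]
  simp only [map_pow, hπ, AddMonoidAlgebra.of'_apply, AddMonoidAlgebra.single_pow, one_pow]
  rw [AddMonoidAlgebra.prod_single, Finset.prod_const_one, valE]
  congr 1
  exact Finset.sum_subset (Finset.subset_univ _) fun v _ hv => by
    rw [Finsupp.notMem_support_iff.mp hv, zero_smul]

lemma monomial_sub_monomial_mem_ker {K : Type*} [Field K]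
    (π : MvPolynomial (Fin (c + d)) K →ₐ[K] AddMonoidAlgebra K (Fin d → ℕ))
    (hπ : ∀ v, π (MvPolynomial.X v) = AddMonoidAlgebra.of' K (Fin d → ℕ) (gens c d α a v))
    {σ τ : Fin (c + d) →₀ ℕ} (h : valE c d α a σ = valE c d α a τ) :
    MvPolynomial.monomial σ (1 : K) - MvPolynomial.monomial τ 1 ∈ RingHom.ker π.toRingHom := by
  rw [RingHom.mem_ker, AlgHom.toRingHom_eq_coe, RingHom.coe_coe, map_sub,
    map_monomial_one π hπ, map_monomial_one π hπ, h, sub_self]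

end Monomials

lemma grevlex_asymm {N : ℕ} {σ τ : Fin N →₀ ℕ} (h : grevlex σ τ) : ¬ grevlex τ σ := by
  rintro (h' | ⟨hd', k', hk', hl'⟩) <;> rcases h with h | ⟨hd, k, hk, hl⟩
  · omega
  · omega
  · omega
  · rcases lt_trichotomy k k' with hkk | rfl | hkk
    · have := hl k' hkk; omega
    · omega
    · have := hl' k hkk; omega

lemma grevlex_irrefl {N : ℕ} (σ : Fin N →₀ ℕ) : ¬ grevlex σ σ :=
  fun h => grevlex_asymm h h

section EquivalenceClasses

variable {d α : ℕ}

lemma Rel.symm {x y : Fin d → ℕ} (h : Rel α x y) : Rel α y x :=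
  fun j => dvd_sub_comm.mp (h j)

lemma add_joinSub (x y : Fin d → ℕ) : y + joinSub x y = x ⊔ y := by
  funext j
  simp only [joinSub, Pi.add_apply, Pi.sup_apply]
  omega

lemma Rel.exists_joinSub_eq_smul {x y : Fin d → ℕ} (h : Rel α x y) :
    ∃ ν : Fin d → ℕ, joinSub x y = α • ν := by
  have hdvd : ∀ j, α ∣ joinSub x y j := by
    intro j
    rcases le_total (x j) (y j) with hxy | hxy
    · simp [joinSub, hxy]
    · rw [show joinSub x y j = x j - y j by simp [joinSub, hxy], ← Int.natCast_dvd_natCast,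
        Nat.cast_sub hxy]
      exact h j
  exact ⟨fun j => joinSub x y j / α, funext fun j => (Nat.mul_div_cancel' (hdvd j)).symm⟩

lemma ltCls.joinSub {x y : Fin d → ℕ} (h : ltCls x y) : ltCls (joinSub x y) (joinSub y x) := by
  obtain ⟨k, hk, hl⟩ := h
  refine ⟨k, ?_, fun l hkl => ?_⟩
  · simp only [SimplicialToric.joinSub]
    omega
  · simp only [SimplicialToric.joinSub, hl l hkl]

lemma ltCls.of_smul (hα : 0 < α) {μ ν : Fin d → ℕ} (h : ltCls (α • μ) (α • ν)) : ltCls μ ν := by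
  obtain ⟨k, hk, hl⟩ := h
  refine ⟨k, Nat.lt_of_mul_lt_mul_left hk, fun l hkl => ?_⟩
  exact Nat.eq_of_mul_eq_mul_left hα (hl l hkl)

end EquivalenceClasses

section MinimalMonomials

variable {c d α : ℕ} {a : Fin c → Fin d → ℕ}

lemma grevlex_add_yExp {σ τ : Fin (c + d) →₀ ℕ} {μ ν : Fin d → ℕ}
    (hσ : xOnly c d σ) (hτ : xOnly c d τ)
    (hdeg : degE (σ + yExp c μ) = degE (τ + yExp c ν)) (hlt : ltCls ν μ) :
    grevlex (σ + yExp c μ) (τ + yExp c ν) := by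
  obtain ⟨k, hk, hl⟩ := hlt
  refine Or.inr ⟨hdeg, Fin.natAdd c k, by simpa [hσ k, hτ k] using hk, fun v hv => ?_⟩
  induction v using Fin.addCases with
  | left i => exact absurd hv (by simp [Fin.lt_def]; omega)
  | right l =>
    simpa [hσ l, hτ l] using (hl l ((Fin.natAdd_lt_natAdd_iff c).mp hv)).symm

lemma not_grevlex_yExp (hα : 0 < α) (hdeg : ∀ i, ∑ j, a i j = α)
    {σ : Fin (c + d) →₀ ℕ} {ν : Fin d → ℕ} (hσ : valE c d α a σ = α • ν) :
    ¬ grevlex σ (yExp c ν) := by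
  have hdegσ : degE σ = ∑ j, ν j := by
    rw [degE_eq_of_valE_eq hα hdeg (hσ.trans (valE_yExp ν).symm), degE_yExp]
  have hy : ∀ j, σ (Fin.natAdd c j) ≤ ν j := fun j => by
    have h := mul_le_valE_apply (α := α) (a := a) σ j
    rw [hσ, Pi.smul_apply, smul_eq_mul, mul_comm α] at h
    exact Nat.le_of_mul_le_mul_right h hα
  rintro (h | ⟨-, k, hk, hl⟩)
  · rw [degE_yExp] at h
    omega
  induction k using Fin.addCases with
  | left i =>
    -- all `y`-exponents of `σ` are those of `y^ν`, so `σ` has no room left for `xᵢ`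
    have hyeq : ∀ j, σ (Fin.natAdd c j) = ν j := fun j => by
      simpa using hl (Fin.natAdd c j) (by simp [Fin.lt_def]; omega)
    have hsum : ∑ j, σ (Fin.natAdd c j) = ∑ j, ν j := Finset.sum_congr rfl fun j _ => hyeq j
    rw [degE_eq_sum_add] at hdegσ
    have hxi := Finset.single_le_sum (f := fun i => σ (Fin.castAdd d i))
      (fun _ _ => Nat.zero_le _) (Finset.mem_univ i)
    simp only [yExp_castAdd] at hk
    omega
  | right j =>
    simp only [yExp_natAdd] at hk
    exact absurd (hy j) (by omega)

variable {B : AddSubmonoid (Fin d → ℕ)} {m : (Fin d → ℕ) → (Fin (c + d) →₀ ℕ)}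

lemma m_smul_eq_yExp (hα : 0 < α)
    (hBgen : B = AddSubmonoid.closure (Set.range a ∪ Set.range (eVec d α)))
    (hdeg : ∀ i, ∑ j, a i j = α)
    (hmval : ∀ b ∈ B, valE c d α a (m b) = b)
    (hmmin : ∀ b ∈ B, ∀ σ, valE c d α a σ = b → m b = σ ∨ grevlex (m b) σ)
    (ν : Fin d → ℕ) : m (α • ν) = yExp c ν := by
  have hmem : α • ν ∈ B := valE_yExp (a := a) ν ▸ valE_mem hBgen (yExp c ν)
  exact (hmmin _ hmem _ (valE_yExp ν)).resolve_right
    (not_grevlex_yExp hα hdeg (hmval _ hmem))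

/-- Dividing `m_b` by a `y`-variable would exhibit `b - eⱼ ∈ B`. -/
lemma xOnly_m_of_mem_BA (hα : 0 < α)
    (hBgen : B = AddSubmonoid.closure (Set.range a ∪ Set.range (eVec d α)))
    (hmval : ∀ b ∈ B, valE c d α a (m b) = b)
    {b : Fin d → ℕ} (hb : b ∈ BA B α) : xOnly c d (m b) := by
  intro j
  by_contra hne
  have hle : Finsupp.single (Fin.natAdd c j) 1 ≤ m b := by
    rw [Finsupp.single_le_iff]
    omega
  refine hb.2 (eVec d α j) (AddSubmonoid.subset_closure ⟨j, rfl⟩) (fun h => ?_)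
    (valE c d α a (m b - Finsupp.single (Fin.natAdd c j) 1)) (valE_mem hBgen _) ?_
  · have := congrFun h j
    simp [eVec] at this
    omega
  · conv_lhs => rw [← hmval b hb.1, ← tsub_add_cancel_of_le hle]
    rw [valE_add, valE_single_one, gens_natAdd]

lemma not_exists_eq_m_of_grevlex
    (hmval : ∀ b ∈ B, valE c d α a (m b) = b)
    (hmmin : ∀ b ∈ B, ∀ σ, valE c d α a σ = b → m b = σ ∨ grevlex (m b) σ)
    {σ τ : Fin (c + d) →₀ ℕ} (hval : valE c d α a σ = valE c d α a τ) (h : grevlex σ τ) :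
    ¬ ∃ b ∈ (B : Set (Fin d → ℕ)), τ = m b := by
  rintro ⟨b, hb, rfl⟩
  rcases hmmin b hb σ (hval.trans (hmval b hb)) with h' | h'
  · exact grevlex_irrefl σ (h' ▸ h)
  · exact grevlex_asymm h h'

end MinimalMonomials

end SimplicialToric

theorem n_monomial_not_in_MB_general
    (c d α : ℕ) (hα : 0 < α)
    (a : Fin c → Fin d → ℕ) (B : AddSubmonoid (Fin d → ℕ))
    (hBgen : B = AddSubmonoid.closure (Set.range a ∪ Set.range (eVec d α)))
    (hdeg : ∀ i, ∑ j, a i j = α)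
    (m : (Fin d → ℕ) → (Fin (c + d) →₀ ℕ))
    (hmval : ∀ b ∈ B, valE c d α a (m b) = b)
    (hmmin : ∀ b ∈ B, ∀ σ, valE c d α a σ = b → m b = σ ∨ grevlex (m b) σ)
    (K : Type*) [Field K]
    (π : MvPolynomial (Fin (c + d)) K →ₐ[K] AddMonoidAlgebra K (Fin d → ℕ))
    (hπ : ∀ v, π (MvPolynomial.X v) = AddMonoidAlgebra.of' K (Fin d → ℕ) (gens c d α a v))
    (bi bj : Fin d → ℕ) (hbi : bi ∈ BA B α) (hbj : bj ∈ BA B α)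
    (hrel : Rel α bi bj) (hlt : ltCls bi bj) :
    (MvPolynomial.monomial (m bj + m (joinSub bi bj)) (1 : K)
        - MvPolynomial.monomial (m bi + m (joinSub bj bi)) (1 : K))
      ∈ RingHom.ker π.toRingHom ∧
    grevlex (m bi + m (joinSub bj bi)) (m bj + m (joinSub bi bj)) ∧
    ¬ ∃ b ∈ (B : Set (Fin d → ℕ)), m bj + m (joinSub bi bj) = m b := by
  obtain ⟨νi, hνi⟩ := hrel.symm.exists_joinSub_eq_smul
  obtain ⟨νj, hνj⟩ := hrel.exists_joinSub_eq_smul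
  have hmi : m (joinSub bj bi) = yExp c νi := hνi ▸ m_smul_eq_yExp hα hBgen hdeg hmval hmmin νi
  have hmj : m (joinSub bi bj) = yExp c νj := hνj ▸ m_smul_eq_yExp hα hBgen hdeg hmval hmmin νj
  have hval : valE c d α a (m bi + m (joinSub bj bi)) = valE c d α a (m bj + m (joinSub bi bj)) := by
    rw [valE_add, valE_add, hmval bi hbi.1, hmval bj hbj.1, hmi, hmj, valE_yExp, valE_yExp,
      ← hνi, ← hνj, add_joinSub, add_joinSub, sup_comm]
  have hgrev : grevlex (m bi + m (joinSub bj bi)) (m bj + m (joinSub bi bj)) := by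
    rw [hmi, hmj] at hval ⊢
    refine grevlex_add_yExp (xOnly_m_of_mem_BA hα hBgen hmval hbi)
      (xOnly_m_of_mem_BA hα hBgen hmval hbj) (degE_eq_of_valE_eq hα hdeg hval) ?_
    exact (hνj ▸ hνi ▸ hlt.joinSub).of_smul hα
  exact ⟨monomial_sub_monomial_mem_ker π hπ hval.symm, hgrev,
    not_exists_eq_m_of_grevlex hmval hmmin hval hgrev⟩

/-- For `bᵢ ≺ bⱼ` in one equivalence class of `B_A`, the binomial
`n(bᵢ,bⱼ) − m_{bᵢ}·m_{bᵢ∨bⱼ−bᵢ}` lies in `ker π`, `m_{bᵢ}·m_{bᵢ∨bⱼ−bᵢ} ≺ n(bᵢ,bⱼ)`,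
and consequently `n(bᵢ,bⱼ) ∉ M_B`. -/
theorem n_monomial_not_in_MB
    (c d α : ℕ) (hα : 0 < α)
    (a : Fin c → Fin d → ℕ) (B : AddSubmonoid (Fin d → ℕ))
    (hBgen : B = AddSubmonoid.closure (Set.range a ∪ Set.range (eVec d α)))
    (hhilb : Hilb B = Set.range a ∪ Set.range (eVec d α))
    (hdeg : ∀ i, ∑ j, a i j = α)
    (m : (Fin d → ℕ) → (Fin (c + d) →₀ ℕ))
    (hmval : ∀ b ∈ B, valE c d α a (m b) = b)
    (hmmin : ∀ b ∈ B, ∀ σ, valE c d α a σ = b → m b = σ ∨ grevlex (m b) σ)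
    (K : Type*) [Field K]
    (π : MvPolynomial (Fin (c + d)) K →ₐ[K] AddMonoidAlgebra K (Fin d → ℕ))
    (hπ : ∀ v, π (MvPolynomial.X v) = AddMonoidAlgebra.of' K (Fin d → ℕ) (gens c d α a v))
    (bi bj : Fin d → ℕ) (hbi : bi ∈ BA B α) (hbj : bj ∈ BA B α)
    (hrel : Rel α bi bj) (hlt : ltCls bi bj) :
    (MvPolynomial.monomial (m bj + m (joinSub bi bj)) (1 : K)
        - MvPolynomial.monomial (m bi + m (joinSub bj bi)) (1 : K))
      ∈ RingHom.ker π.toRingHom ∧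
    grevlex (m bi + m (joinSub bj bi)) (m bj + m (joinSub bi bj)) ∧
    ¬ ∃ b ∈ (B : Set (Fin d → ℕ)), m bj + m (joinSub bi bj) = m b :=
  n_monomial_not_in_MB_general c d α hα a B hBgen hdeg m hmval hmmin K π hπ bi bj hbi hbj hrel hlt
end
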